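/- arXiv:math/0307071 — 4 statements merged into one kernel-verified Lean document; each statement's English description precedes it below -/
import Mathlib

section
/- Let A ≥ c₂ > c₁ > 0 be real numbers and set ζ = (c₂ − c₁)/(A − c₁). Given real numbers a₁, …, a_N satisfying Σ_{j=1}^{N} a_j ≥ c₂·N and a_j ≤ A for all 1 ≤ j ≤ N, there exist an integer l ≥ ζ·N and integers 1 ≤ n₁ < n₂ < ⋯ < n_l ≤ N such that Σ_{j=n+1}^{n_i} a_j ≥ c₁·(n_i − n) for every 0 ≤ n < n_i and every i = 1, …, l. -/
/-!
Put `S n = ∑_{j ≤ n} (a j - c₁)`. Then `n` is a Pliss time exactly when `S n ≥ S m` for all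
`m < n`, i.e. when `n` is a record time of `S`. Since `S` grows by at most `A - c₁` per step,
it can only climb between records: `S n ≤ (A - c₁) · #{records ≤ n}`. At `n = N` the hypothesis
gives `S N ≥ (c₂ - c₁) N`, so there are at least `ζ N` records.
-/

open Finset

section Records

variable {α : Type*} [LE α]

def IsRecord (S : ℕ → α) (n : ℕ) : Prop := ∀ m < n, S m ≤ S n

open Classical in
noncomputable def recordTimes (S : ℕ → α) (n : ℕ) : Finset ℕ := (Ioc 0 n).filter (IsRecord S)

@[simp]
lemma mem_recordTimes {S : ℕ → α} {n k : ℕ} :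
    k ∈ recordTimes S n ↔ (0 < k ∧ k ≤ n) ∧ IsRecord S k := by
  simp [recordTimes]

open Classical in
lemma recordTimes_mono (S : ℕ → α) : Monotone (recordTimes S) := fun _ _ h =>
  filter_subset_filter _ (Ioc_subset_Ioc_right h)

open Classical in
lemma card_recordTimes_succ_of_isRecord {S : ℕ → α} {n : ℕ} (h : IsRecord S (n + 1)) :
    #(recordTimes S (n + 1)) = #(recordTimes S n) + 1 := by
  rw [recordTimes, recordTimes, ← insert_Ioc_right_eq_Ioc_add_one n.zero_le, filter_insert,
    if_pos h, card_insert_of_notMem (by simp)]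

end Records

theorem le_add_card_recordTimes_nsmul {α : Type*} [AddCommMonoid α] [LinearOrder α]
    [IsOrderedAddMonoid α] {S : ℕ → α} {D : α} (hD : 0 ≤ D) {n : ℕ}
    (hstep : ∀ k < n, S (k + 1) ≤ S k + D) : S n ≤ S 0 + #(recordTimes S n) • D := by
  induction n using Nat.strong_induction_on with
  | _ n ih =>
  match n with
  | 0 => simp [recordTimes]
  | k + 1 =>
    by_cases hrec : IsRecord S (k + 1)
    · calc S (k + 1) ≤ S k + D := hstep k k.lt_succ_self
        _ ≤ S 0 + #(recordTimes S k) • D + D :=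
          add_le_add_left (ih k k.lt_succ_self fun j hj => hstep j (by omega)) D
        _ = S 0 + #(recordTimes S (k + 1)) • D := by
          rw [card_recordTimes_succ_of_isRecord hrec, succ_nsmul, add_assoc]
    · obtain ⟨m, hm, hSm⟩ : ∃ m < k + 1, S (k + 1) < S m := by simpa [IsRecord] using hrec
      calc S (k + 1) ≤ S m := hSm.le
        _ ≤ S 0 + #(recordTimes S m) • D := ih m hm fun j hj => hstep j (by omega)
        _ ≤ S 0 + #(recordTimes S (k + 1)) • D := by
          gcongr
          exact recordTimes_mono S hm.le

section PartialSums

variable (a : ℕ → ℝ) (c : ℝ)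

def excessSum (n : ℕ) : ℝ := ∑ j ∈ Ioc 0 n, (a j - c)

@[simp]
lemma excessSum_zero : excessSum a c 0 = 0 := sum_empty

lemma excessSum_sub_excessSum {m n : ℕ} (hmn : m ≤ n) :
    excessSum a c n - excessSum a c m = ∑ j ∈ Icc (m + 1) n, a j - c * (n - m) := by
  rw [excessSum, excessSum, ← sum_Ioc_consecutive _ m.zero_le hmn, add_sub_cancel_left,
    Icc_add_one_left_eq_Ioc, sum_sub_distrib, sum_const, Nat.card_Ioc, nsmul_eq_mul,
    Nat.cast_sub hmn, mul_comm]

lemma excessSum_succ (n : ℕ) : excessSum a c (n + 1) = excessSum a c n + (a (n + 1) - c) :=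
  sum_Ioc_succ_top n.zero_le _

lemma mul_sub_le_sum_Icc_of_isRecord {m n : ℕ} (h : IsRecord (excessSum a c) n) (hm : m < n) :
    c * (n - m) ≤ ∑ j ∈ Icc (m + 1) n, a j := by
  linarith [excessSum_sub_excessSum a c hm.le, h m hm]

lemma excessSum_le_card_recordTimes_mul {A : ℝ} {N : ℕ} (hcA : c ≤ A)
    (hbound : ∀ j, 1 ≤ j → j ≤ N → a j ≤ A) :
    excessSum a c N ≤ #(recordTimes (excessSum a c) N) * (A - c) := by
  have h := le_add_card_recordTimes_nsmul (S := excessSum a c) (sub_nonneg.2 hcA) (n := N)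
    fun k hk => by rw [excessSum_succ]; linarith [hbound (k + 1) (by omega) hk]
  simpa [nsmul_eq_mul] using h

end PartialSums

theorem pliss_lemma_general (N : ℕ) (A c₁ c₂ : ℝ) (hc₁c₂ : c₁ < c₂) (hc₂A : c₂ ≤ A)
    (a : ℕ → ℝ)
    (hsum : c₂ * N ≤ ∑ j ∈ Finset.Icc 1 N, a j)
    (hbound : ∀ j, 1 ≤ j → j ≤ N → a j ≤ A) :
    ∃ (l : ℕ) (n : Fin l → ℕ),
      ((c₂ - c₁) / (A - c₁)) * N ≤ (l : ℝ) ∧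
      StrictMono n ∧
      (∀ i, 1 ≤ n i ∧ n i ≤ N) ∧
      (∀ (i : Fin l) (m : ℕ), m < n i →
        c₁ * ((n i : ℝ) - (m : ℝ)) ≤ ∑ j ∈ Finset.Icc (m + 1) (n i), a j) := by
  set E := recordTimes (excessSum a c₁) N
  have hE (i : Fin #E) : E.orderEmbOfFin rfl i ∈ E := orderEmbOfFin_mem E rfl i
  refine ⟨#E, fun i => E.orderEmbOfFin rfl i, ?_, (E.orderEmbOfFin rfl).strictMono,
    fun i => ?_, fun i m hm => mul_sub_le_sum_Icc_of_isRecord a c₁ (mem_recordTimes.1 (hE i)).2 hm⟩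
  · have hS : (c₂ - c₁) * N ≤ excessSum a c₁ N := by
      have h := excessSum_sub_excessSum a c₁ N.zero_le
      rw [excessSum_zero, sub_zero, zero_add, Nat.cast_zero, sub_zero] at h
      linarith
    rw [div_mul_eq_mul_div, div_le_iff₀ (by linarith)]
    exact hS.trans (excessSum_le_card_recordTimes_mul a c₁ (by linarith) hbound)
  · exact (mem_recordTimes.1 (hE i)).1

/-- **Pliss lemma.** Let `A ≥ c₂ > c₁ > 0` and `ζ = (c₂ - c₁)/(A - c₁)`. Given real numbers
`a 1, …, a N` with `∑_{j=1}^N a j ≥ c₂ * N` and `a j ≤ A` for all `1 ≤ j ≤ N`, there exist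
`l ≥ ζ * N` and `1 ≤ n₁ < n₂ < ⋯ < n_l ≤ N` such that
`∑_{j=n+1}^{n_i} a j ≥ c₁ * (n_i - n)` for every `0 ≤ n < n_i` and every `i`. -/
theorem pliss_lemma (N : ℕ) (A c₁ c₂ : ℝ) (hc₁ : 0 < c₁) (hc₁c₂ : c₁ < c₂) (hc₂A : c₂ ≤ A)
    (a : ℕ → ℝ)
    (hsum : c₂ * N ≤ ∑ j ∈ Finset.Icc 1 N, a j)
    (hbound : ∀ j, 1 ≤ j → j ≤ N → a j ≤ A) :
    ∃ (l : ℕ) (n : Fin l → ℕ),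
      ((c₂ - c₁) / (A - c₁)) * N ≤ (l : ℝ) ∧
      StrictMono n ∧
      (∀ i, 1 ≤ n i ∧ n i ≤ N) ∧
      (∀ (i : Fin l) (m : ℕ), m < n i →
        c₁ * ((n i : ℝ) - (m : ℝ)) ≤ ∑ j ∈ Finset.Icc (m + 1) (n i), a j) :=
  pliss_lemma_general N A c₁ c₂ hc₁c₂ hc₂A a hsum hbound
end

section
/- Let c > 0 and A ≥ 3c/2 with A > c, and let (a_j)_{j≥0} be a sequence of real numbers such that a_j ≥ −A for all j and limsup_{n→∞} (1/n) Σ_{j=0}^{n−1} a_j ≤ −2c. Then the set H of c-hyperbolic times of (a_j) has lower density at least ζ = (c/2)/(A − c) > 0, i.e. liminf_{n→∞} #{m ∈ H : 1 ≤ m ≤ n}/n ≥ ζ; in particular (a_j) has infinitely many c-hyperbolic times. -/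
/-!
Put `S n = ∑_{j<n} (a j + c)`. Then `n` is a `c`-hyperbolic time exactly when `S n ≤ S i` for
all `i < n`, so the running minimum of `S` can only drop at hyperbolic times, and by at most
`A - c` each time since `a j + c ≥ -(A - c)`. Hence
`-(A - c) · #(hyperbolic times in [1, n]) ≤ S n`, while the limsup hypothesis gives
`S n < -(c/2) n` for large `n`.
-/

open scoped Classical

/-- `n ≥ 1` is a `c`-hyperbolic time of the sequence `a` if
`∑_{j=n-k}^{n-1} a j ≤ -c * k` for every `1 ≤ k ≤ n`. -/
def IsHyperbolicTime (c : ℝ) (a : ℕ → ℝ) (n : ℕ) : Prop :=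
  ∀ k, 1 ≤ k → k ≤ n → ∑ j ∈ Finset.Ico (n - k) n, a j ≤ -c * (k : ℝ)

open Finset Filter

section HyperbolicTimes

variable (c : ℝ) (a : ℕ → ℝ)

noncomputable def shiftedPartialSum (n : ℕ) : ℝ := ∑ j ∈ range n, (a j + c)

noncomputable def hyperbolicCount (n : ℕ) : ℕ := #{m ∈ Icc 1 n | IsHyperbolicTime c a m}

lemma shiftedPartialSum_sub_shiftedPartialSum {i n : ℕ} (h : i ≤ n) :
    shiftedPartialSum c a n - shiftedPartialSum c a i =
      ∑ j ∈ Ico i n, a j + c * (n - i : ℕ) := by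
  rw [shiftedPartialSum, shiftedPartialSum, ← sum_Ico_eq_sub _ h, sum_add_distrib, sum_const,
    Nat.card_Ico, nsmul_eq_mul, mul_comm]

lemma isHyperbolicTime_iff_forall_lt (n : ℕ) :
    IsHyperbolicTime c a n ↔ ∀ i < n, shiftedPartialSum c a n ≤ shiftedPartialSum c a i := by
  constructor
  · intro h i hi
    have hk := h (n - i) (by omega) (Nat.sub_le n i)
    rw [Nat.sub_sub_self hi.le] at hk
    linarith [shiftedPartialSum_sub_shiftedPartialSum c a hi.le]
  · intro h k hk hkn
    have hdiff := shiftedPartialSum_sub_shiftedPartialSum c a (Nat.sub_le n k)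
    rw [Nat.sub_sub_self hkn] at hdiff
    linarith [h (n - k) (by omega)]

lemma hyperbolicCount_succ (n : ℕ) :
    hyperbolicCount c a (n + 1) =
      hyperbolicCount c a n + if IsHyperbolicTime c a (n + 1) then 1 else 0 := by
  rw [hyperbolicCount, hyperbolicCount, ← insert_Icc_right_eq_Icc_add_one (by omega),
    filter_insert]
  split_ifs
  · exact card_insert_of_notMem (by simp)
  · rfl

lemma hyperbolicCount_le (n : ℕ) : hyperbolicCount c a n ≤ n :=
  (card_filter_le _ _).trans (by simp)

lemma neg_mul_hyperbolicCount_le_shiftedPartialSum {A : ℝ} (hAc : c ≤ A)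
    (hbound : ∀ j, -A ≤ a j) (n : ℕ) :
    ∀ i ≤ n, -(A - c) * hyperbolicCount c a n ≤ shiftedPartialSum c a i := by
  induction n with
  | zero => simp [shiftedPartialSum, hyperbolicCount]
  | succ n ih =>
    intro i hi
    have hstep : shiftedPartialSum c a (n + 1) = shiftedPartialSum c a n + (a n + c) :=
      sum_range_succ _ n
    rw [hyperbolicCount_succ]
    split_ifs with hyp
    · rcases Nat.le_succ_iff.mp hi with hi | rfl
      · push_cast
        nlinarith [ih i hi]
      · push_cast
        linarith [ih n le_rfl, hbound n]
    · rw [Nat.add_zero]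
      rcases Nat.le_succ_iff.mp hi with hi | rfl
      · exact ih i hi
      · obtain ⟨j, hj, hlt⟩ :
            ∃ j < n + 1, shiftedPartialSum c a j < shiftedPartialSum c a (n + 1) := by
          simpa [isHyperbolicTime_iff_forall_lt] using hyp
        linarith [ih j (Nat.lt_succ_iff.mp hj)]

lemma mul_le_mul_hyperbolicCount_of_sum_range_le {A δ : ℝ} (hAc : c ≤ A)
    (hbound : ∀ j, -A ≤ a j) {n : ℕ} (hsum : ∑ j ∈ range n, a j ≤ -(c + δ) * n) :
    δ * n ≤ (A - c) * hyperbolicCount c a n := by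
  have hS : shiftedPartialSum c a n = ∑ j ∈ range n, a j + c * n := by
    simp [shiftedPartialSum, sum_add_distrib, mul_comm]
  linarith [neg_mul_hyperbolicCount_le_shiftedPartialSum c a hAc hbound n n le_rfl]

end HyperbolicTimes

lemma Set.infinite_of_eventually_mul_le_card_filter_Icc {p : ℕ → Prop} [DecidablePred p]
    {ζ : ℝ} (hζ : 0 < ζ) (h : ∀ᶠ n in atTop, ζ * n ≤ #{m ∈ Finset.Icc 1 n | p m}) :
    {n | p n}.Infinite := by
  intro hfin
  have hgrow : Tendsto (fun n : ℕ => ζ * n) atTop atTop :=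
    tendsto_natCast_atTop_atTop.const_mul_atTop hζ
  obtain ⟨n, hn, hgt⟩ := (h.and (hgrow.eventually_gt_atTop #hfin.toFinset)).exists
  have hsub : #{m ∈ Finset.Icc 1 n | p m} ≤ #hfin.toFinset :=
    Finset.card_le_card fun m hm => by simpa using (mem_filter.mp hm).2
  have : (#{m ∈ Finset.Icc 1 n | p m} : ℝ) ≤ #hfin.toFinset := by exact_mod_cast hsub
  linarith

theorem hyperbolic_times_positive_density_general (c A : ℝ) (hc : 0 < c)
    (hAc : c < A)
    (a : ℕ → ℝ) (hbound : ∀ j, -A ≤ a j)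
    (hexp : Filter.limsup (fun n : ℕ => (∑ j ∈ Finset.range n, a j) / (n : ℝ))
      Filter.atTop ≤ -2 * c) :
    (c / 2) / (A - c) ≤
      Filter.liminf
        (fun n : ℕ =>
          (((Finset.Icc 1 n).filter (fun m => IsHyperbolicTime c a m)).card : ℝ) / (n : ℝ))
        Filter.atTop ∧
    {n : ℕ | IsHyperbolicTime c a n}.Infinite := by
  set ζ := (c / 2) / (A - c)
  have hAc' : 0 < A - c := sub_pos.mpr hAc
  have hbdd : IsBoundedUnder (· ≤ ·) atTop fun n : ℕ => (∑ j ∈ range n, a j) / n := by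
    by_contra hnot
    rw [Real.limsup_of_not_isBoundedUnder hnot] at hexp
    linarith
  have hmean := eventually_lt_of_limsup_lt (hexp.trans_lt (by linarith : -2 * c < -(3 * c / 2)))
    hbdd
  have hdens : ∀ᶠ n : ℕ in atTop, 0 < n ∧ ζ * n ≤ hyperbolicCount c a n := by
    filter_upwards [hmean, eventually_gt_atTop 0] with n hn hn0
    have hn0' : (0 : ℝ) < n := by exact_mod_cast hn0
    have hsum : ∑ j ∈ range n, a j ≤ -(c + c / 2) * n := by
      linarith [(div_lt_iff₀ hn0').mp hn]
    refine ⟨hn0, ?_⟩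
    rw [div_mul_eq_mul_div, div_le_iff₀ hAc']
    linarith [mul_le_mul_hyperbolicCount_of_sum_range_le c a hAc.le hbound hsum]
  refine ⟨le_liminf_of_le (isCoboundedUnder_ge_of_le atTop (x := 1) fun n => ?_) ?_,
    Set.infinite_of_eventually_mul_le_card_filter_Icc (by positivity)
      (hdens.mono fun _ => And.right)⟩
  · exact div_le_one_of_le₀ (by exact_mod_cast hyperbolicCount_le c a n) n.cast_nonneg
  · exact hdens.mono fun n hn => (le_div_iff₀ (by exact_mod_cast hn.1)).mpr hn.2

/-- If `c > 0`, `A ≥ 3c/2`, `A > c`, `a j ≥ -A` for all `j`, and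
`limsup (1/n) ∑_{j<n} a j ≤ -2c`, then the set of `c`-hyperbolic times of `a` has lower
density at least `ζ = (c/2)/(A - c) > 0`; in particular there are infinitely many
`c`-hyperbolic times. -/
theorem hyperbolic_times_positive_density (c A : ℝ) (hc : 0 < c)
    (hA : 3 * c / 2 ≤ A) (hAc : c < A)
    (a : ℕ → ℝ) (hbound : ∀ j, -A ≤ a j)
    (hexp : Filter.limsup (fun n : ℕ => (∑ j ∈ Finset.range n, a j) / (n : ℝ))
      Filter.atTop ≤ -2 * c) :
    (c / 2) / (A - c) ≤
      Filter.liminf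
        (fun n : ℕ =>
          (((Finset.Icc 1 n).filter (fun m => IsHyperbolicTime c a m)).card : ℝ) / (n : ℝ))
        Filter.atTop ∧
    {n : ℕ | IsHyperbolicTime c a n}.Infinite :=
  hyperbolic_times_positive_density_general c A hc hAc a hbound hexp
end

section
/- Let d ≥ 1, c > 0, ε₀ > 0 and let f₁, …, f_n be C¹ diffeomorphisms of ℝ^d. For x ∈ ℝ^d set x₀ = x and x_j = f_j(x_{j−1}) for 1 ≤ j ≤ n, and similarly z₀ = z, z_j = f_j(z_{j−1}). Assume: (i) for every 1 ≤ j ≤ n and all ξ, η ∈ ℝ^d with ‖ξ − η‖ ≤ ε₀ one has ‖Df_j(ξ)^{−1}‖ ≤ e^{c/2} ‖Df_j(η)^{−1}‖ (operator norms); (ii) n is a hyperbolic time for x with exponent c, i.e. ∏_{j=n−k+1}^{n} ‖Df_j(x_{j−1})^{−1}‖ ≤ e^{−ck} for every 1 ≤ k ≤ n. Then for every z ∈ ℝ^d with ‖z_n − x_n‖ ≤ ε₀ and every 0 ≤ j ≤ n one has ‖z_{n−j} − x_{n−j}‖ ≤ e^{−cj/2} ‖z_n − x_n‖. -/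
/-!
Pull the segment from `f x` to `f z` back by the inverse diffeomorphism: as long as the resulting
curve stays in the `ε₀`-ball around `x`, its speed is at most `‖Df(x)⁻¹‖ e^{c/2} ‖f z - f x‖`,
and a continuity (fencing) argument shows that it never leaves the ball when this length is
`< ε₀`. Each backward step therefore contracts by `e^{c/2} ‖Df_j(x_{j-1})⁻¹‖`, and at a
hyperbolic time the product of the last `j` such factors is at most `e^{-cj/2} < 1`, which keeps
every pulled-back segment inside its ball.
-/

open Set Filter Topology

theorem norm_image_sub_le_of_norm_deriv_le_on_closedBall {E : Type*} [NormedAddCommGroup E]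
    [NormedSpace ℝ E] {f f' : ℝ → E} {a b C R : ℝ}
    (hf : ContinuousOn f (Icc a b)) (hf' : ∀ x ∈ Ico a b, HasDerivWithinAt f (f' x) (Ici x) x)
    (hC : 0 ≤ C) (hCR : C * (b - a) < R)
    (bound : ∀ x ∈ Ico a b, f x ∈ Metric.closedBall (f a) R → ‖f' x‖ ≤ C) :
    ∀ x ∈ Icc a b, ‖f x - f a‖ ≤ C * (x - a) := by
  intro x hx
  have hab : 0 ≤ b - a := by linarith [hx.1, hx.2]
  set η₀ := (R - C * (b - a)) / (1 + (b - a))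
  have hη₀ : 0 < η₀ := div_pos (by linarith) (by linarith)
  -- Fence `f - f a` by the lines `η + (C + η) (t - a)`, which stay inside the ball for `η < η₀`.
  have fence : ∀ η ∈ Ioo 0 η₀, ‖f x - f a‖ ≤ η + (C + η) * (x - a) := by
    rintro η ⟨hη, hηη₀⟩
    have hηR : η + (C + η) * (b - a) < R := by
      have := (lt_div_iff₀ (by linarith : (0 : ℝ) < 1 + (b - a))).1 hηη₀
      nlinarith
    refine image_norm_le_of_norm_deriv_right_lt_deriv_boundary (f := fun t => f t - f a)
      (B := fun t => η + (C + η) * (t - a)) (B' := fun _ => C + η)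
      (hf.sub continuousOn_const) (fun t ht => (hf' t ht).sub_const (f a)) (by simpa using hη.le)
      (fun t => by simpa using (((hasDerivAt_id t).sub_const a).const_mul (C + η)).const_add η)
      (fun t ht heq => ?_) hx
    have hmem : f t ∈ Metric.closedBall (f a) R := by
      rw [mem_closedBall_iff_norm, heq]
      nlinarith [ht.1, ht.2]
    linarith [bound t ht hmem]
  have hlim : Tendsto (fun η : ℝ => η + (C + η) * (x - a)) (𝓝[>] 0) (𝓝 (C * (x - a))) := by
    have hcont : Continuous fun η : ℝ => η + (C + η) * (x - a) := by fun_prop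
    exact (hcont.tendsto' 0 _ (by simp)).mono_left nhdsWithin_le_nhds
  exact ge_of_tendsto hlim (eventually_nhdsWithin_of_eventually_nhds
    (eventually_lt_nhds hη₀) |>.and self_mem_nhdsWithin |>.mono fun η hη => fence η ⟨hη.2, hη.1⟩)

theorem Equiv.hasFDerivAt_symm_of_hasStrictFDerivAt {𝕜 : Type*} [NontriviallyNormedField 𝕜]
    {E : Type*} [NormedAddCommGroup E] [NormedSpace 𝕜 E] [CompleteSpace E]
    {F : Type*} [NormedAddCommGroup F] [NormedSpace 𝕜 F] (e : E ≃ F) {e' : E → E ≃L[𝕜] F}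
    (he : ∀ x, HasStrictFDerivAt e (e' x : E →L[𝕜] F) x) (y : F) :
    HasFDerivAt e.symm ((e' (e.symm y)).symm : F →L[𝕜] E) y := by
  let h : E ≃ₜ F := e.toHomeomorphOfContinuousOpen
    (continuous_iff_continuousAt.2 fun x => (he x).continuousAt)
    (isOpenMap_of_hasStrictFDerivAt_equiv he)
  exact (he _).hasFDerivAt.of_local_left_inverse h.symm.continuous.continuousAt
    (Eventually.of_forall e.apply_symm_apply)

theorem norm_sub_le_mul_norm_apply_sub_of_norm_symm_fderiv_le {E : Type*} [NormedAddCommGroup E]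
    [NormedSpace ℝ E] [CompleteSpace E] {F : Type*} [NormedAddCommGroup F] [NormedSpace ℝ F]
    {g : E → F} {g' : E → E ≃L[ℝ] F}
    (hg : Function.Bijective g) (hg' : ∀ ξ, HasStrictFDerivAt g (g' ξ : E →L[ℝ] F) ξ)
    {p q : E} {K ε : ℝ} (hK : 0 ≤ K)
    (bound : ∀ ξ ∈ Metric.closedBall p ε, ‖((g' ξ).symm : F →L[ℝ] E)‖ ≤ K)
    (hsmall : K * ‖g q - g p‖ < ε) :
    ‖q - p‖ ≤ K * ‖g q - g p‖ := by
  set e := Equiv.ofBijective g hg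
  set v := g q - g p
  set γ : ℝ → E := fun s => e.symm (g p + s • v)
  have hγ : ∀ s, HasDerivAt γ (((g' (γ s)).symm : F →L[ℝ] E) v) s := fun s =>
    (e.hasFDerivAt_symm_of_hasStrictFDerivAt hg' _).comp_hasDerivAt s
      (by simpa using ((hasDerivAt_id s).smul_const v).const_add (g p))
  have hγ0 : γ 0 = p := by simp [γ, e]
  have hγ1 : γ 1 = q := by simp [γ, e, v]
  have key := norm_image_sub_le_of_norm_deriv_le_on_closedBall (a := 0) (b := 1)
    (C := K * ‖v‖) (R := ε)
    (fun s _ => (hγ s).continuousAt.continuousWithinAt) (fun s _ => (hγ s).hasDerivWithinAt)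
    (by positivity) (by simpa using hsmall)
    (fun s _ hs => ((g' (γ s)).symm : F →L[ℝ] E).le_of_opNorm_le (bound _ (hγ0 ▸ hs)) v)
    1 (right_mem_Icc.2 zero_le_one)
  simpa [hγ0, hγ1] using key

theorem norm_sub_le_prod_mul_of_backward_step {E : Type*} [SeminormedAddCommGroup E] {n : ℕ}
    {x z : ℕ → E} {K : ℕ → ℝ} {ε : ℝ} (hK : ∀ i, 0 ≤ K i)
    (step : ∀ i < n, K i * ‖z (i + 1) - x (i + 1)‖ < ε →
      ‖z i - x i‖ ≤ K i * ‖z (i + 1) - x (i + 1)‖)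
    (hsmall : ∀ i < n, (∏ l ∈ Finset.Ico i n, K l) * ‖z n - x n‖ < ε) :
    ∀ i ≤ n, ‖z i - x i‖ ≤ (∏ l ∈ Finset.Ico i n, K l) * ‖z n - x n‖ := by
  intro i hi
  induction hi using Nat.decreasingInduction with
  | self => simp
  | of_succ i hi ih =>
    have hprod := Finset.prod_eq_prod_Ico_succ_bot hi K
    have hnext : K i * ‖z (i + 1) - x (i + 1)‖ ≤ (∏ l ∈ Finset.Ico i n, K l) * ‖z n - x n‖ := by
      rw [hprod, mul_assoc]
      exact mul_le_mul_of_nonneg_left ih (hK i)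
    exact (step i hi (hnext.trans_lt (hsmall i hi))).trans hnext

theorem prod_exp_half_mul_le_of_prod_le {ι : Type*} (s : Finset ι) {a : ι → ℝ} {c : ℝ}
    (h : ∏ i ∈ s, a i ≤ Real.exp (-c * s.card)) :
    ∏ i ∈ s, Real.exp (c / 2) * a i ≤ Real.exp (-c * s.card / 2) := by
  rw [Finset.prod_mul_distrib, Finset.prod_const]
  calc Real.exp (c / 2) ^ s.card * ∏ i ∈ s, a i
      ≤ Real.exp (c / 2) ^ s.card * Real.exp (-c * s.card) := by gcongr
    _ = Real.exp (-c * s.card / 2) := by rw [← Real.exp_nat_mul, ← Real.exp_add]; ring_nf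

theorem norm_sub_le_exp_mul_of_hyperbolic_time {E : Type*} [SeminormedAddCommGroup E] {n : ℕ}
    {x z : ℕ → E} {D : ℕ → ℝ} {c ε : ℝ} (hc : 0 < c) (hε : 0 < ε) (hD : ∀ i, 0 ≤ D i)
    (step : ∀ i < n, Real.exp (c / 2) * D i * ‖z (i + 1) - x (i + 1)‖ < ε →
      ‖z i - x i‖ ≤ Real.exp (c / 2) * D i * ‖z (i + 1) - x (i + 1)‖)
    (hhyp : ∀ k, 1 ≤ k → k ≤ n → ∏ i ∈ Finset.Ico (n - k) n, D i ≤ Real.exp (-c * k))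
    (hclose : ‖z n - x n‖ ≤ ε) :
    ∀ j ≤ n, ‖z (n - j) - x (n - j)‖ ≤ Real.exp (-c * j / 2) * ‖z n - x n‖ := by
  have hK : ∀ i, 0 ≤ Real.exp (c / 2) * D i := fun i => mul_nonneg (Real.exp_pos _).le (hD i)
  have hprod : ∀ i < n, ∏ l ∈ Finset.Ico i n, Real.exp (c / 2) * D l ≤
      Real.exp (-c * (n - i : ℕ) / 2) := fun i hi => by
    simpa using prod_exp_half_mul_le_of_prod_le (Finset.Ico i n)
      (by simpa [Nat.sub_sub_self hi.le] using hhyp (n - i) (by omega) (Nat.sub_le n i))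
  have hsmall : ∀ i < n, (∏ l ∈ Finset.Ico i n, Real.exp (c / 2) * D l) * ‖z n - x n‖ < ε := by
    intro i hi
    have hlt : ∏ l ∈ Finset.Ico i n, Real.exp (c / 2) * D l < 1 := by
      refine (hprod i hi).trans_lt (Real.exp_lt_one_iff.2 ?_)
      have : (0 : ℝ) < (n - i : ℕ) := by exact_mod_cast Nat.sub_pos_of_lt hi
      nlinarith
    exact (mul_le_mul_of_nonneg_left hclose (Finset.prod_nonneg fun l _ => hK l)).trans_lt
      (mul_lt_of_lt_one_left hε hlt)
  intro j hj
  rcases j.eq_zero_or_pos with rfl | hj0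
  · simp
  have hprod_j := hprod (n - j) (by omega)
  rw [Nat.sub_sub_self hj] at hprod_j
  calc ‖z (n - j) - x (n - j)‖
      ≤ (∏ l ∈ Finset.Ico (n - j) n, Real.exp (c / 2) * D l) * ‖z n - x n‖ :=
        norm_sub_le_prod_mul_of_backward_step (K := fun l => Real.exp (c / 2) * D l) hK step hsmall
          (n - j) (Nat.sub_le n j)
    _ ≤ Real.exp (-c * j / 2) * ‖z n - x n‖ := by gcongr

theorem backward_contraction_at_hyperbolic_times_general
    (d : ℕ) (c ε₀ : ℝ) (hc : 0 < c) (hε₀ : 0 < ε₀) (n : ℕ)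
    (f : ℕ → EuclideanSpace ℝ (Fin d) → EuclideanSpace ℝ (Fin d))
    (Df : ℕ → EuclideanSpace ℝ (Fin d) →
      (EuclideanSpace ℝ (Fin d) ≃L[ℝ] EuclideanSpace ℝ (Fin d)))
    (hdiffeo : ∀ j < n, ContDiff ℝ 1 (f j) ∧ Function.Bijective (f j))
    (hDf : ∀ j < n, ∀ ξ, HasFDerivAt (f j)
      ((Df j ξ : EuclideanSpace ℝ (Fin d) →L[ℝ] EuclideanSpace ℝ (Fin d))) ξ)
    (hvar : ∀ j < n, ∀ ξ η : EuclideanSpace ℝ (Fin d), ‖ξ - η‖ ≤ ε₀ →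
      ‖((Df j ξ).symm : EuclideanSpace ℝ (Fin d) →L[ℝ] EuclideanSpace ℝ (Fin d))‖ ≤
        Real.exp (c / 2) *
          ‖((Df j η).symm : EuclideanSpace ℝ (Fin d) →L[ℝ] EuclideanSpace ℝ (Fin d))‖)
    (x z : ℕ → EuclideanSpace ℝ (Fin d))
    (hx : ∀ j < n, x (j + 1) = f j (x j))
    (hz : ∀ j < n, z (j + 1) = f j (z j))
    (hhyp : ∀ k, 1 ≤ k → k ≤ n →
      (∏ j ∈ Finset.Ico (n - k) n,
        ‖((Df j (x j)).symm : EuclideanSpace ℝ (Fin d) →L[ℝ] EuclideanSpace ℝ (Fin d))‖) ≤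
        Real.exp (-c * (k : ℝ)))
    (hclose : ‖z n - x n‖ ≤ ε₀) :
    ∀ j ≤ n, ‖z (n - j) - x (n - j)‖ ≤ Real.exp (-c * (j : ℝ) / 2) * ‖z n - x n‖ := by
  refine norm_sub_le_exp_mul_of_hyperbolic_time hc hε₀ (fun _ => norm_nonneg _) (fun i hi => ?_)
    hhyp hclose
  rw [hx i hi, hz i hi]
  exact norm_sub_le_mul_norm_apply_sub_of_norm_symm_fderiv_le (hdiffeo i hi).2
    (fun ξ => (hdiffeo i hi).1.contDiffAt.hasStrictFDerivAt' (hDf i hi ξ) one_ne_zero)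
    (by positivity) (fun ξ hξ => hvar i hi ξ (x i) (mem_closedBall_iff_norm.1 hξ))

/-- **Backward contraction at hyperbolic times.** Let `f 0, …, f (n-1)` be C¹ diffeomorphisms
of `ℝ^d` with invertible derivatives `Df`, such that on `ε₀`-balls the norms of inverse
derivatives vary by a factor at most `e^{c/2}`. Let `x` and `z` be orbits:
`x (j+1) = f j (x j)`, `z (j+1) = f j (z j)`. If `n` is a hyperbolic time for `x` with
exponent `c` (i.e. `∏_{j=n-k}^{n-1} ‖Df j (x j)⁻¹‖ ≤ e^{-ck}` for `1 ≤ k ≤ n`) and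
`‖z n - x n‖ ≤ ε₀`, then `‖z (n-j) - x (n-j)‖ ≤ e^{-cj/2} ‖z n - x n‖` for all `0 ≤ j ≤ n`. -/
theorem backward_contraction_at_hyperbolic_times
    (d : ℕ) (hd : 1 ≤ d) (c ε₀ : ℝ) (hc : 0 < c) (hε₀ : 0 < ε₀) (n : ℕ)
    (f : ℕ → EuclideanSpace ℝ (Fin d) → EuclideanSpace ℝ (Fin d))
    (Df : ℕ → EuclideanSpace ℝ (Fin d) →
      (EuclideanSpace ℝ (Fin d) ≃L[ℝ] EuclideanSpace ℝ (Fin d)))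
    (hdiffeo : ∀ j < n, ContDiff ℝ 1 (f j) ∧ Function.Bijective (f j))
    (hDf : ∀ j < n, ∀ ξ, HasFDerivAt (f j)
      ((Df j ξ : EuclideanSpace ℝ (Fin d) →L[ℝ] EuclideanSpace ℝ (Fin d))) ξ)
    (hvar : ∀ j < n, ∀ ξ η : EuclideanSpace ℝ (Fin d), ‖ξ - η‖ ≤ ε₀ →
      ‖((Df j ξ).symm : EuclideanSpace ℝ (Fin d) →L[ℝ] EuclideanSpace ℝ (Fin d))‖ ≤
        Real.exp (c / 2) *
          ‖((Df j η).symm : EuclideanSpace ℝ (Fin d) →L[ℝ] EuclideanSpace ℝ (Fin d))‖)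
    (x z : ℕ → EuclideanSpace ℝ (Fin d))
    (hx : ∀ j < n, x (j + 1) = f j (x j))
    (hz : ∀ j < n, z (j + 1) = f j (z j))
    (hhyp : ∀ k, 1 ≤ k → k ≤ n →
      (∏ j ∈ Finset.Ico (n - k) n,
        ‖((Df j (x j)).symm : EuclideanSpace ℝ (Fin d) →L[ℝ] EuclideanSpace ℝ (Fin d))‖) ≤
        Real.exp (-c * (k : ℝ)))
    (hclose : ‖z n - x n‖ ≤ ε₀) :
    ∀ j ≤ n, ‖z (n - j) - x (n - j)‖ ≤ Real.exp (-c * (j : ℝ) / 2) * ‖z n - x n‖ :=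
  backward_contraction_at_hyperbolic_times_general d c ε₀ hc hε₀ n f Df hdiffeo hDf hvar x z hx hz
    hhyp hclose
end

section
/- Let p, q ≥ 1 be integers and let σ > q be a real number. Then there exist γ₀ ∈ (0, 1) and τ ∈ (0, 1) such that for every integer n ≥ 1, σ^{−(1−γ₀)n} · Σ_{0 ≤ k ≤ γ₀ n} C(n,k)·p^k·q^{n−k} ≤ τ^n. -/
/-!
Chernoff's trick: for `0 < x ≤ 1`, each term with `k ≤ γ n` only grows when multiplied by
`x ^ (k - γ n) ≥ 1`, so the truncated binomial sum is at most `x ^ (-γ n) (p x + q) ^ n`. The whole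
expression is then `τ ^ n` with `τ = σ ^ (-(1 - γ)) x ^ (-γ) (p x + q)`. Taking `x` small enough that
`p x + q < σ` makes `τ < 1` at `γ = 0`, hence for all small `γ > 0` by continuity.
-/

open Filter Finset Real

lemma exists_pos_lt_one_lt_of_continuousAt {f : ℝ → ℝ} {c : ℝ} (hf : ContinuousAt f 0)
    (h : f 0 < c) : ∃ x, 0 < x ∧ x < 1 ∧ f x < c := by
  obtain ⟨x, hfx, hx⟩ := (((hf.eventually (gt_mem_nhds h)).filter_mono nhdsWithin_le_nhds).and
    (Ioo_mem_nhdsGT one_pos)).exists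
  exact ⟨x, hx.1, hx.2, hfx⟩

lemma sum_filter_choose_mul_pow_le_rpow_mul_add_pow {a b x : ℝ} (ha : 0 ≤ a) (hb : 0 ≤ b)
    (hx₀ : 0 < x) (hx₁ : x ≤ 1) (t : ℝ) (n : ℕ) :
    ∑ k ∈ (range (n + 1)).filter (fun k : ℕ => (k : ℝ) ≤ t),
        (n.choose k : ℝ) * a ^ k * b ^ (n - k) ≤ x ^ (-t) * (a * x + b) ^ n := by
  have hterm : ∀ k ∈ (range (n + 1)).filter (fun k : ℕ => (k : ℝ) ≤ t),
      (n.choose k : ℝ) * a ^ k * b ^ (n - k) ≤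
        x ^ (-t) * ((a * x) ^ k * b ^ (n - k) * n.choose k) := by
    intro k hk
    have hxk : x ^ (-(k : ℝ)) ≤ x ^ (-t) :=
      rpow_le_rpow_of_exponent_ge hx₀ hx₁ (neg_le_neg (mem_filter.1 hk).2)
    calc (n.choose k : ℝ) * a ^ k * b ^ (n - k)
        = x ^ (-(k : ℝ)) * ((a * x) ^ k * b ^ (n - k) * n.choose k) := by
          rw [rpow_neg hx₀.le, rpow_natCast, mul_pow]
          field_simp
      _ ≤ x ^ (-t) * ((a * x) ^ k * b ^ (n - k) * n.choose k) := by gcongr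
  calc _ ≤ ∑ k ∈ (range (n + 1)).filter (fun k : ℕ => (k : ℝ) ≤ t),
          x ^ (-t) * ((a * x) ^ k * b ^ (n - k) * n.choose k) := sum_le_sum hterm
    _ ≤ ∑ k ∈ range (n + 1), x ^ (-t) * ((a * x) ^ k * b ^ (n - k) * n.choose k) :=
        sum_le_sum_of_subset_of_nonneg (filter_subset _ _) fun _ _ _ => by positivity
    _ = x ^ (-t) * (a * x + b) ^ n := by rw [← mul_sum, add_pow]

lemma rpow_mul_natCast_mul_rpow_mul_pow {s x : ℝ} (hs : 0 ≤ s) (hx : 0 ≤ x) (u v y : ℝ)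
    (n : ℕ) : s ^ (u * n) * (x ^ (v * n) * y ^ n) = (s ^ u * x ^ v * y) ^ n := by
  rw [mul_pow, mul_pow, rpow_mul hs, rpow_mul hx, rpow_natCast, rpow_natCast, mul_assoc]

theorem volume_of_bad_itineraries_exponentially_small_general
    (p q : ℕ) (hq : 1 ≤ q) (σ : ℝ) (hσ : (q : ℝ) < σ) :
    ∃ γ₀ τ : ℝ, 0 < γ₀ ∧ γ₀ < 1 ∧ 0 < τ ∧ τ < 1 ∧
      ∀ n : ℕ, 1 ≤ n →
        σ ^ (-(1 - γ₀) * (n : ℝ)) *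
          (∑ k ∈ (Finset.range (n + 1)).filter (fun k : ℕ => ((k : ℝ) ≤ γ₀ * n)),
            ((n.choose k : ℝ) * (p : ℝ) ^ k * (q : ℝ) ^ (n - k))) ≤ τ ^ n := by
  have hσ₀ : 0 < σ := (Nat.cast_nonneg q).trans_lt hσ
  have hq₀ : (0 : ℝ) < q := by exact_mod_cast hq
  obtain ⟨x, hx₀, hx₁, hxσ⟩ : ∃ x, 0 < x ∧ x < 1 ∧ (p : ℝ) * x + q < σ :=
    exists_pos_lt_one_lt_of_continuousAt (by fun_prop) (by simpa using hσ)
  set τ : ℝ → ℝ := fun γ => σ ^ (-(1 - γ)) * x ^ (-γ) * (p * x + q)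
  obtain ⟨γ, hγ₀, hγ₁, hτ₁⟩ : ∃ γ, 0 < γ ∧ γ < 1 ∧ τ γ < 1 := by
    refine exists_pos_lt_one_lt_of_continuousAt (by fun_prop (disch := positivity)) ?_
    simpa [τ, rpow_neg_one, inv_mul_lt_one₀ hσ₀] using hxσ
  refine ⟨γ, τ γ, hγ₀, hγ₁, by positivity, hτ₁, fun n _ => ?_⟩
  calc _ ≤ σ ^ (-(1 - γ) * (n : ℝ)) * (x ^ (-γ * n) * ((p : ℝ) * x + q) ^ n) := by
        rw [neg_mul γ]
        gcongr
        exact sum_filter_choose_mul_pow_le_rpow_mul_add_pow p.cast_nonneg q.cast_nonneg hx₀ hx₁.le _ n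
    _ = τ γ ^ n := rpow_mul_natCast_mul_rpow_mul_pow hσ₀.le hx₀.le _ _ _ n

/-- Let `p, q ≥ 1` be integers and `σ > q` real. Then there exist `γ₀, τ ∈ (0,1)` such that
for every `n ≥ 1`, `σ^{-(1-γ₀)n} * ∑_{0 ≤ k ≤ γ₀ n} C(n,k) p^k q^{n-k} ≤ τ^n`. -/
theorem volume_of_bad_itineraries_exponentially_small
    (p q : ℕ) (hp : 1 ≤ p) (hq : 1 ≤ q) (σ : ℝ) (hσ : (q : ℝ) < σ) :
    ∃ γ₀ τ : ℝ, 0 < γ₀ ∧ γ₀ < 1 ∧ 0 < τ ∧ τ < 1 ∧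
      ∀ n : ℕ, 1 ≤ n →
        σ ^ (-(1 - γ₀) * (n : ℝ)) *
          (∑ k ∈ (Finset.range (n + 1)).filter (fun k : ℕ => ((k : ℝ) ≤ γ₀ * n)),
            ((n.choose k : ℝ) * (p : ℝ) ^ k * (q : ℝ) ^ (n - k))) ≤ τ ^ n :=
  volume_of_bad_itineraries_exponentially_small_general p q hq σ hσ
end
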